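/- Let μ be a probability measure on M, let r ≥ 0 be real, and let n ≥ 1 be a natural number. Then (e^{(r/n)(μ⋆−1)})^{*n} = e^{r(μ⋆−1)}. Consequently, every convolution exponential is infinitely divisible: for every n ≥ 1 there exists a probability measure ν on M with ν^{*n} = e^{r(μ⋆−1)}. -/

import Mathlib

/-!
Convolution is bilinear over countable sums and `μ^{*i} ⋆ μ^{*j} = μ^{*(i+j)}`, so convolving two
convolution exponentials multiplies their power series; the binomial identity
`∑_{i+j=n} a^i/i! · b^j/j! = (a+b)^n/n!` then gives
`e^{a(μ⋆−1)} ⋆ e^{b(μ⋆−1)} = e^{(a+b)(μ⋆−1)}` for `a, b ≥ 0`. Iterating, the `n`-th convolution power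
of `e^{(r/n)(μ⋆−1)}` is `e^{r(μ⋆−1)}`, and it is a probability measure since `∑ rⁿ/n! = eʳ`.
-/

open MeasureTheory

/-- n-fold convolution power, with `μ^{*0} = δ_1`. -/
noncomputable def mconvPow {M : Type*} [Monoid M] [MeasurableSpace M]
    (μ : Measure M) : ℕ → Measure M
  | 0 => Measure.dirac 1
  | n + 1 => Measure.mconv (mconvPow μ n) μ

/-- The convolution exponential `e^{r(μ⋆−1)} = e^{−r} ∑ (r^n/n!) • μ^{*n}`. -/
noncomputable def convExp {M : Type*} [Monoid M] [MeasurableSpace M]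
    (μ : Measure M) (r : ℝ) : Measure M :=
  ENNReal.ofReal (Real.exp (-r)) •
    Measure.sum fun n => ENNReal.ofReal (r ^ n / n.factorial) • mconvPow μ n

open Measure Finset
open scoped ENNReal Nat

theorem add_pow_div_factorial_eq_sum_antidiagonal {K : Type*} [Field K] [CharZero K]
    (a b : K) (n : ℕ) :
    (a + b) ^ n / n ! = ∑ p ∈ antidiagonal n, a ^ p.1 / p.1 ! * (b ^ p.2 / p.2 !) := by
  rw [(Commute.all a b).add_pow', sum_div]
  refine sum_congr rfl fun p hp => ?_
  rw [← mem_antidiagonal.mp hp, nsmul_eq_mul, Nat.cast_add_choose]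
  have : ((p.1 + p.2) ! : K) ≠ 0 := Nat.cast_ne_zero.mpr (Nat.factorial_ne_zero _)
  field_simp

theorem ENNReal.ofReal_add_pow_div_factorial {a b : ℝ} (ha : 0 ≤ a) (hb : 0 ≤ b) (n : ℕ) :
    ENNReal.ofReal ((a + b) ^ n / n !) = ∑ p ∈ antidiagonal n,
      ENNReal.ofReal (a ^ p.1 / p.1 !) * ENNReal.ofReal (b ^ p.2 / p.2 !) := by
  rw [add_pow_div_factorial_eq_sum_antidiagonal,
    ENNReal.ofReal_sum_of_nonneg fun p _ => by positivity]
  exact sum_congr rfl fun p _ => ENNReal.ofReal_mul (by positivity)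

theorem ENNReal.tsum_ofReal_pow_div_factorial {r : ℝ} (hr : 0 ≤ r) :
    ∑' n : ℕ, ENNReal.ofReal (r ^ n / n !) = ENNReal.ofReal (Real.exp r) := by
  rw [← ENNReal.ofReal_tsum_of_nonneg (fun n => by positivity) (Real.summable_pow_div_factorial r),
    Real.exp_eq_exp_ℝ, NormedSpace.exp_eq_tsum_div]

namespace MeasureTheory.Measure

variable {α : Type*} [MeasurableSpace α]

theorem sum_sigma {ι : Type*} {κ : ι → Type*} (m : (Σ i, κ i) → Measure α) :
    sum m = sum fun i => sum fun j => m ⟨i, j⟩ := by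
  ext s hs
  simp [sum_apply _ hs, ENNReal.tsum_sigma']

theorem sum_smul_add_eq_sum_antidiagonal {A : Type*} [AddMonoid A] [HasAntidiagonal A]
    (c : A × A → ℝ≥0∞) (m : A → Measure α) :
    sum (fun p => c p • m (p.1 + p.2)) = sum fun n => (∑ p ∈ antidiagonal n, c p) • m n := by
  rw [← sum_comp_equiv HasAntidiagonal.sigmaAntidiagonalEquivProd, sum_sigma]
  refine congrArg sum (funext fun n => ?_)
  calc (sum fun j : antidiagonal n => c j • m ((j : A × A).1 + (j : A × A).2))
      = sum fun j : antidiagonal n => c j • m n :=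
        congrArg sum (funext fun j => by rw [mem_antidiagonal.mp j.2])
    _ = _ := by rw [sum_coe_finset (antidiagonal n) fun p => c p • m n, Finset.sum_smul]

variable {M : Type*} [Monoid M] [MeasurableSpace M] [MeasurableMul₂ M]

theorem sum_mconv {ι : Type*} (m : ι → Measure M) (ν : Measure M) [SFinite ν] :
    sum m ∗ₘ ν = sum fun i => m i ∗ₘ ν := by
  rw [mconv, prod_sum_left, map_sum (by fun_prop)]
  rfl

theorem mconv_sum {ι : Type*} [Countable ι] (μ : Measure M) (m : ι → Measure M)
    [∀ i, SFinite (m i)] : μ ∗ₘ sum m = sum fun i => μ ∗ₘ m i := by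
  rw [mconv, prod_sum_right, map_sum (by fun_prop)]
  rfl

theorem sum_mconv_sum {ι κ : Type*} [Countable κ] (m : ι → Measure M) (m' : κ → Measure M)
    [∀ j, SFinite (m' j)] : sum m ∗ₘ sum m' = sum fun p : ι × κ => m p.1 ∗ₘ m' p.2 := by
  simp_rw [sum_mconv, mconv_sum]
  exact sum_sum _

end MeasureTheory.Measure

section ConvolutionExponential

variable {M : Type*} [Monoid M] [MeasurableSpace M]

theorem convExp_zero (μ : Measure M) : convExp μ 0 = dirac 1 := by
  ext s hs
  rw [convExp, neg_zero, Real.exp_zero, ENNReal.ofReal_one, one_smul, sum_apply _ hs,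
    tsum_eq_single 0 fun i hi => by simp [zero_pow hi]]
  simp [mconvPow]

variable [MeasurableMul₂ M]

instance (μ : Measure M) [SFinite μ] (n : ℕ) : SFinite (mconvPow μ n) := by
  induction n with
  | zero => rw [mconvPow]; infer_instance
  | succ n ih => rw [mconvPow]; infer_instance

instance (μ : Measure M) [IsProbabilityMeasure μ] (n : ℕ) :
    IsProbabilityMeasure (mconvPow μ n) := by
  induction n with
  | zero => rw [mconvPow]; infer_instance
  | succ n ih => rw [mconvPow]; infer_instance

theorem mconvPow_add (μ : Measure M) [SFinite μ] (i j : ℕ) :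
    mconvPow μ i ∗ₘ mconvPow μ j = mconvPow μ (i + j) := by
  induction j with
  | zero => exact mconv_dirac_one _
  | succ j ih => rw [mconvPow, ← mconv_assoc, ih]; rfl

instance (μ : Measure M) [SFinite μ] (r : ℝ) : SFinite (convExp μ r) := by
  rw [convExp]; infer_instance

theorem isProbabilityMeasure_convExp (μ : Measure M) [IsProbabilityMeasure μ] {r : ℝ}
    (hr : 0 ≤ r) : IsProbabilityMeasure (convExp μ r) := by
  constructor
  simp only [convExp, Measure.smul_apply, sum_apply _ MeasurableSet.univ, measure_univ, smul_eq_mul,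
    mul_one, ENNReal.tsum_ofReal_pow_div_factorial hr]
  rw [← ENNReal.ofReal_mul (Real.exp_nonneg _), ← Real.exp_add, neg_add_cancel, Real.exp_zero,
    ENNReal.ofReal_one]

theorem convExp_mconv_convExp (μ : Measure M) [SFinite μ] {a b : ℝ} (ha : 0 ≤ a) (hb : 0 ≤ b) :
    convExp μ a ∗ₘ convExp μ b = convExp μ (a + b) := by
  rw [convExp, convExp, convExp, mconv_smul_left, mconv_smul_right, smul_smul,
    ← ENNReal.ofReal_mul (Real.exp_nonneg _), ← Real.exp_add, ← neg_add, sum_mconv_sum]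
  congr 1
  simp_rw [mconv_smul_left, mconv_smul_right, smul_smul, mconvPow_add,
    sum_smul_add_eq_sum_antidiagonal, ENNReal.ofReal_add_pow_div_factorial ha hb]

theorem mconvPow_convExp (μ : Measure M) [SFinite μ] {c : ℝ} (hc : 0 ≤ c) (n : ℕ) :
    mconvPow (convExp μ c) n = convExp μ (n * c) := by
  induction n with
  | zero => rw [mconvPow, Nat.cast_zero, zero_mul, convExp_zero]
  | succ n ih =>
    rw [mconvPow, ih, convExp_mconv_convExp μ (by positivity) hc]
    congr 1
    push_cast
    ring

end ConvolutionExponential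

theorem stmt11 {M : Type*} [CommMonoid M] [MeasurableSpace M] [MeasurableMul₂ M]
    (μ : Measure M) [IsProbabilityMeasure μ]
    (r : ℝ) (hr : 0 ≤ r) (n : ℕ) (hn : 1 ≤ n) :
    mconvPow (convExp μ (r / n)) n = convExp μ r ∧
      ∃ ν : Measure M, IsProbabilityMeasure ν ∧ mconvPow ν n = convExp μ r := by
  have hrn : 0 ≤ r / n := by positivity
  have h_root : mconvPow (convExp μ (r / n)) n = convExp μ r := by
    rw [mconvPow_convExp μ hrn, mul_div_cancel₀ r (Nat.cast_ne_zero.mpr (Nat.one_le_iff_ne_zero.mp hn))]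
  exact ⟨h_root, convExp μ (r / n), isProbabilityMeasure_convExp μ hrn, h_root⟩
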